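/- Fix a real E-by-V matrix d, a diagonal V-by-V matrix ★₀ with positive diagonal, a diagonal E-by-E matrix ★₁, a vertex w ∈ V, and n = |V|. For t ∈ ℝ let ★₀(t) = ★₀ + t E_ww. Suppose xⁱ(t) ∈ ℝ^V and λⁱ(t) ∈ ℝ (i = 1, …, n) are differentiable at 0, satisfy dᵀ★₁d xⁱ(t) = λⁱ(t) ★₀(t) xⁱ(t) and (xⁱ(t))ᵀ★₀(t)xⁱ(t) = 1 near 0, satisfy (xⁱ(0))ᵀ★₀xʲ(0) = δᵢⱼ, and the eigenvalues λ¹(0), …, λⁿ(0) are pairwise distinct. Let ℒ : ℝⁿ × (ℝ^V)ⁿ → ℝ be differentiable. Then d/dt ℒ(λ¹(t), …, λⁿ(t), x¹(t), …, xⁿ(t)) at t = 0 equals −Σᵢ (∂ℒ/∂λⁱ) λⁱ (xⁱ_w)² + Σ_{i,v,j} (∂ℒ/∂xⁱᵥ) Nᵢⱼ xʲ_w xⁱ_w xʲᵥ, where all quantities on the right are evaluated at t = 0, Nᵢⱼ = λⁱ/(λʲ − λⁱ) for i ≠ j, and Nᵢᵢ = −1/2. -/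

import Mathlib

/-!
Write `A = dᵀ★₁d`, `B = ★₀` and `C = E_ww`. Differentiating `A xⁱ(t) = λⁱ(t) (B + t C) xⁱ(t)` at
`t = 0` and pairing with the eigenvector `xʲ(0)`, the symmetry of `A` and `B` gives
`(λʲ - λⁱ) cᵢⱼ = λⁱ (xʲ)ᵀ C xⁱ + (λⁱ)' δᵢⱼ` for `cᵢⱼ = (xʲ)ᵀ B (xⁱ)'`, while differentiating the
normalization gives `2 cᵢᵢ = -(xⁱ)ᵀ C xⁱ`. This determines `(λⁱ)'`, and since a `B`-orthonormal
family of `n` vectors is a basis, `(xⁱ)' = Σⱼ cᵢⱼ xʲ` determines `(xⁱ)'`. The chain rule, with the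
derivative of `ℒ` expanded in coordinates, then yields the formula.
-/

open Matrix Filter Topology

theorem Matrix.IsSymm.transpose_mul_mul {R m n : Type*} [CommSemiring R] [Fintype m]
    {D : Matrix m m R} (hD : D.IsSymm) (d : Matrix m n R) : (dᵀ * D * d).IsSymm := by
  rw [IsSymm, transpose_mul, transpose_mul, hD.eq, transpose_transpose, Matrix.mul_assoc]

section LinearAlgebra

variable {R n : Type*} [CommRing R] [Fintype n] {A B C : Matrix n n R}

theorem Matrix.IsSymm.dotProduct_mulVec_comm (hB : B.IsSymm) (u v : n → R) :
    u ⬝ᵥ (B *ᵥ v) = v ⬝ᵥ (B *ᵥ u) := by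
  rw [dotProduct_mulVec, ← mulVec_transpose, hB.eq, dotProduct_comm]

theorem dotProduct_single_mulVec [DecidableEq n] (w : n) (u v : n → R) :
    u ⬝ᵥ (single w w 1 *ᵥ v) = u w * v w := by
  rw [single_mulVec, ← Pi.single, dotProduct_single, one_mul]

theorem eq_sum_dotProduct_mulVec_smul_of_orthonormal [DecidableEq n] {x : n → n → R}
    (hx : ∀ i j, x i ⬝ᵥ (B *ᵥ x j) = if i = j then 1 else 0) (y : n → R) :
    y = ∑ j, (x j ⬝ᵥ (B *ᵥ y)) • x j := by
  set X : Matrix n n R := Matrix.of x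
  have hgram : X * (B * Xᵀ) = 1 := by
    ext i j
    rw [one_apply, ← hx i j, ← Matrix.mul_assoc]
    simp only [X, mul_apply, of_apply, transpose_apply, dotProduct, mulVec, Finset.mul_sum,
      mul_comm, mul_left_comm]
    exact Finset.sum_comm
  have hcomplete : Xᵀ * X * B = 1 := by
    refine mul_eq_one_comm.1 ?_
    rw [← Matrix.mul_assoc]
    exact mul_eq_one_comm.1 hgram
  calc y = Xᵀ *ᵥ (X *ᵥ (B *ᵥ y)) := by rw [mulVec_mulVec, mulVec_mulVec, hcomplete, one_mulVec]
    _ = ∑ j, (x j ⬝ᵥ (B *ᵥ y)) • x j := by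
      ext v; simp [X, mulVec, dotProduct, Finset.sum_apply, mul_comm]

theorem sub_mul_dotProduct_mulVec_of_linearized_eigen (hA : A.IsSymm) (hB : B.IsSymm)
    {u v u' : n → R} {μ ν μ' : R} (hv : A *ᵥ v = ν • (B *ᵥ v))
    (hu' : A *ᵥ u' = μ • (B *ᵥ u' + C *ᵥ u) + μ' • (B *ᵥ u)) :
    (ν - μ) * (v ⬝ᵥ (B *ᵥ u')) = μ * (v ⬝ᵥ (C *ᵥ u)) + μ' * (v ⬝ᵥ (B *ᵥ u)) := by
  have h := congrArg (v ⬝ᵥ ·) hu'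
  simp only [dotProduct_add, dotProduct_smul, smul_eq_mul] at h
  rw [hA.dotProduct_mulVec_comm, hv, dotProduct_smul, smul_eq_mul,
    hB.dotProduct_mulVec_comm u' v] at h
  linear_combination h

end LinearAlgebra

theorem LinearMap.apply_prod_pi_eq_sum {R M ι κ μ : Type*} [CommSemiring R] [AddCommMonoid M]
    [Module R M] [Fintype ι] [Fintype κ] [Fintype μ] [DecidableEq ι] [DecidableEq κ]
    [DecidableEq μ] (φ : (ι → R) × (κ → μ → R) →ₗ[R] M) (a : ι → R) (b : κ → μ → R) :
    φ (a, b) = ∑ i, a i • φ (Pi.single i 1, 0)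
      + ∑ k, ∑ l, b k l • φ (0, Pi.single k (Pi.single l 1)) := by
  have ha : (a, (0 : κ → μ → R)) = ∑ i, a i • ((Pi.single i 1 : ι → R), (0 : κ → μ → R)) := by
    ext j <;> simp [Prod.fst_sum, Prod.snd_sum, Pi.single_apply]
  have hb : ((0 : ι → R), b)
      = ∑ k, ∑ l, b k l • ((0 : ι → R), (Pi.single k (Pi.single l 1) : κ → μ → R)) := by
    ext <;> simp [Prod.fst_sum, Prod.snd_sum, Finset.sum_apply, Pi.single_apply, ite_apply]
  rw [show (a, b) = (a, 0) + (0, b) by simp, map_add, ha, hb]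
  simp only [map_sum, map_smul]

section Calculus

variable {𝕜 : Type*} [NontriviallyNormedField 𝕜] {m n : Type*} [Fintype m] [Fintype n]
  {f g : 𝕜 → n → 𝕜} {f' g' : n → 𝕜} {t : 𝕜}

theorem HasDerivAt.matrix_mulVec [CompleteSpace 𝕜] (A : Matrix m n 𝕜) (hf : HasDerivAt f f' t) :
    HasDerivAt (fun s => A *ᵥ f s) (A *ᵥ f') t :=
  (Matrix.mulVecLin A).toContinuousLinearMap.hasFDerivAt.comp_hasDerivAt t hf

theorem HasDerivAt.dotProduct (hf : HasDerivAt f f' t) (hg : HasDerivAt g g' t) :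
    HasDerivAt (fun s => f s ⬝ᵥ g s) (f' ⬝ᵥ g t + f t ⬝ᵥ g') t := by
  have h : ∀ v ∈ Finset.univ, HasDerivAt (fun s => f s v * g s v) (f' v * g t v + f t v * g' v) t :=
    fun v _ => (hasDerivAt_pi.1 hf v).mul (hasDerivAt_pi.1 hg v)
  simpa only [_root_.dotProduct, Finset.sum_add_distrib] using HasDerivAt.fun_sum h

end Calculus

section Pencil

variable {n : Type*} [Fintype n] {A B C : Matrix n n ℝ} {x : ℝ → n → ℝ} {x' : n → ℝ}
  {lam : ℝ → ℝ} {lam' : ℝ}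

theorem HasDerivAt.pencil_mulVec (B C : Matrix n n ℝ) (hx : HasDerivAt x x' 0) :
    HasDerivAt (fun t => (B + t • C) *ᵥ x t) (B *ᵥ x' + C *ᵥ x 0) 0 := by
  have h := (hx.matrix_mulVec B).fun_add ((hasDerivAt_id' (0 : ℝ)).fun_smul (hx.matrix_mulVec C))
  simp only [zero_smul, one_smul, zero_add, ← smul_mulVec, ← add_mulVec] at h
  exact h

theorem mulVec_deriv_of_eventually_pencil_eigen (hx : HasDerivAt x x' 0)
    (hlam : HasDerivAt lam lam' 0)
    (heig : ∀ᶠ t in 𝓝 0, A *ᵥ x t = lam t • ((B + t • C) *ᵥ x t)) :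
    A *ᵥ x' = lam 0 • (B *ᵥ x' + C *ᵥ x 0) + lam' • (B *ᵥ x 0) := by
  have h := (hlam.smul (hx.pencil_mulVec B C)).congr_of_eventuallyEq heig
  simpa using (hx.matrix_mulVec A).unique h

theorem dotProduct_deriv_of_eventually_pencil_normalized (hx : HasDerivAt x x' 0)
    (hnorm : ∀ᶠ t in 𝓝 0, x t ⬝ᵥ ((B + t • C) *ᵥ x t) = 1) :
    x' ⬝ᵥ (B *ᵥ x 0) + x 0 ⬝ᵥ (B *ᵥ x' + C *ᵥ x 0) = 0 := by
  have h := (hasDerivAt_const (0 : ℝ) (1 : ℝ)).congr_of_eventuallyEq hnorm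
  simpa using (hx.dotProduct (hx.pencil_mulVec B C)).unique h

theorem eigenvalue_deriv_eq_of_pencil (hA : A.IsSymm) (hB : B.IsSymm) (hx : HasDerivAt x x' 0)
    (hlam : HasDerivAt lam lam' 0)
    (heig : ∀ᶠ t in 𝓝 0, A *ᵥ x t = lam t • ((B + t • C) *ᵥ x t))
    (hnorm : x 0 ⬝ᵥ (B *ᵥ x 0) = 1) :
    lam' = -(lam 0 * (x 0 ⬝ᵥ (C *ᵥ x 0))) := by
  have h := sub_mul_dotProduct_mulVec_of_linearized_eigen hA hB
    (by simpa using heig.self_of_nhds) (mulVec_deriv_of_eventually_pencil_eigen hx hlam heig)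
  rw [sub_self, zero_mul, hnorm] at h
  linarith

end Pencil

noncomputable def eigenvectorDerivCoeff {ι : Type*} [DecidableEq ι] (μ : ι → ℝ) (i j : ι) : ℝ :=
  if j = i then -1 / 2 else μ i / (μ j - μ i)

section Family

variable {n : Type*} [Fintype n] {A B C : Matrix n n ℝ} {x : n → ℝ → n → ℝ} {x' : n → n → ℝ}
  {lam : n → ℝ → ℝ} {lam' : n → ℝ}

theorem eigenvector_deriv_eq_sum [DecidableEq n] (hA : A.IsSymm) (hB : B.IsSymm)
    (hx : ∀ i, HasDerivAt (x i) (x' i) 0) (hlam : ∀ i, HasDerivAt (lam i) (lam' i) 0)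
    (heig : ∀ i, ∀ᶠ t in 𝓝 0, A *ᵥ x i t = lam i t • ((B + t • C) *ᵥ x i t))
    (hnorm : ∀ i, ∀ᶠ t in 𝓝 0, x i t ⬝ᵥ ((B + t • C) *ᵥ x i t) = 1)
    (horth : ∀ i j, x i 0 ⬝ᵥ (B *ᵥ x j 0) = if i = j then 1 else 0)
    (hdist : ∀ i j, i ≠ j → lam i 0 ≠ lam j 0) (i : n) :
    x' i = ∑ j, (eigenvectorDerivCoeff (lam · 0) i j * (x j 0 ⬝ᵥ (C *ᵥ x i 0))) • x j 0 := by
  refine (eq_sum_dotProduct_mulVec_smul_of_orthonormal horth (x' i)).trans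
    (Finset.sum_congr rfl fun j _ => congrArg (· • x j 0) ?_)
  unfold eigenvectorDerivCoeff
  split_ifs with hji
  · subst hji
    have h := dotProduct_deriv_of_eventually_pencil_normalized (hx j) (hnorm j)
    rw [dotProduct_add, hB.dotProduct_mulVec_comm (x' j)] at h
    linarith
  · have h := sub_mul_dotProduct_mulVec_of_linearized_eigen hA hB
      (by simpa using (heig j).self_of_nhds)
      (mulVec_deriv_of_eventually_pencil_eigen (hx i) (hlam i) (heig i))
    rw [horth j i, if_neg hji, mul_zero, add_zero] at h
    rw [div_mul_eq_mul_div, eq_div_iff (sub_ne_zero.2 (hdist j i hji))]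
    linear_combination h

end Family

theorem stmt_14_general {E V : Type*} [Fintype E] [Fintype V] [DecidableEq E] [DecidableEq V]
    (d : Matrix E V ℝ) (s0 : V → ℝ) (s1 : E → ℝ) (w : V)
    (x : V → ℝ → V → ℝ) (lam : V → ℝ → ℝ)
    (x' : V → V → ℝ) (lam' : V → ℝ)
    (hx : ∀ i, HasDerivAt (x i) (x' i) 0)
    (hlam : ∀ i, HasDerivAt (lam i) (lam' i) 0)
    (heig : ∀ i, ∀ᶠ t in 𝓝 (0 : ℝ),
      (dᵀ * Matrix.diagonal s1 * d) *ᵥ x i t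
        = lam i t • ((Matrix.diagonal s0 + t • Matrix.single w w 1) *ᵥ x i t))
    (hnorm : ∀ i, ∀ᶠ t in 𝓝 (0 : ℝ),
      x i t ⬝ᵥ ((Matrix.diagonal s0 + t • Matrix.single w w 1) *ᵥ x i t) = 1)
    (horth : ∀ i j, x i 0 ⬝ᵥ (Matrix.diagonal s0 *ᵥ x j 0) = if i = j then 1 else 0)
    (hdist : ∀ i j, i ≠ j → lam i 0 ≠ lam j 0)
    (L : (V → ℝ) × (V → V → ℝ) → ℝ)
    (hL : DifferentiableAt ℝ L ((fun i => lam i 0), (fun i => x i 0))) :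
    HasDerivAt (fun t => L ((fun i => lam i t), (fun i => x i t)))
      (-(∑ i, (fderiv ℝ L ((fun i => lam i 0), (fun i => x i 0))
            (Pi.single i 1, 0)) * lam i 0 * (x i 0 w) ^ 2)
        + ∑ i, ∑ v, ∑ j,
          (fderiv ℝ L ((fun i => lam i 0), (fun i => x i 0))
            (0, Pi.single i (Pi.single v 1)))
          * (if j = i then (-(1 : ℝ) / 2) else lam i 0 / (lam j 0 - lam i 0))
          * x j 0 w * x i 0 w * x j 0 v) 0 := by
  have hA := (isSymm_diagonal s1).transpose_mul_mul d
  have hB := isSymm_diagonal s0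
  have hlam' (i : V) : lam' i = -(lam i 0 * x i 0 w ^ 2) := by
    rw [eigenvalue_deriv_eq_of_pencil hA hB (hx i) (hlam i) (heig i) (by simp [horth]),
      dotProduct_single_mulVec, sq]
  have hx' (i v : V) : x' i v = ∑ j, eigenvectorDerivCoeff (lam · 0) i j
      * (x j 0 w * x i 0 w) * x j 0 v := by
    simp [eigenvector_deriv_eq_sum hA hB hx hlam heig hnorm horth hdist i, Finset.sum_apply,
      dotProduct_single_mulVec]
  have hcomp := hL.hasFDerivAt.comp_hasDerivAt 0
    ((hasDerivAt_pi.2 hlam).prodMk (hasDerivAt_pi.2 hx))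
  refine hcomp.congr_deriv ?_
  rw [← ContinuousLinearMap.coe_coe, LinearMap.apply_prod_pi_eq_sum]
  simp only [ContinuousLinearMap.coe_coe, hlam', hx', smul_eq_mul, Finset.sum_mul,
    ← Finset.sum_neg_distrib, eigenvectorDerivCoeff]
  congr 1
  · exact Finset.sum_congr rfl fun i _ => by ring
  · refine Finset.sum_congr rfl fun i _ => Finset.sum_congr rfl fun v _ =>
      Finset.sum_congr rfl fun j _ => by ring

/-- Scalar case of the first backpropagation formula of Proposition 1: for a
differentiable loss `ℒ(λ¹,…,λⁿ, x¹,…,xⁿ)` and the perturbation `★₀(t) = ★₀ + t E_ww` of the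
pencil `(dᵀ★₁d, ★₀(t))` with `★₀`-orthonormal eigenvectors and pairwise distinct eigenvalues,
`d/dt ℒ(λ(t), x(t))|₀ = −Σᵢ (∂ℒ/∂λⁱ) λⁱ (xⁱ_w)² + Σ_{i,v,j} (∂ℒ/∂xⁱᵥ) Nᵢⱼ xʲ_w xⁱ_w xʲᵥ`,
where `Nᵢⱼ = λⁱ/(λʲ − λⁱ)` for `i ≠ j` and `Nᵢᵢ = −1/2`. The partial derivatives of `ℒ` are
expressed via its Fréchet derivative applied to coordinate basis directions. -/
theorem stmt_14 {E V : Type*} [Fintype E] [Fintype V] [DecidableEq E] [DecidableEq V]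
    (d : Matrix E V ℝ) (s0 : V → ℝ) (hs0 : ∀ v, 0 < s0 v) (s1 : E → ℝ) (w : V)
    (x : V → ℝ → V → ℝ) (lam : V → ℝ → ℝ)
    (x' : V → V → ℝ) (lam' : V → ℝ)
    (hx : ∀ i, HasDerivAt (x i) (x' i) 0)
    (hlam : ∀ i, HasDerivAt (lam i) (lam' i) 0)
    (heig : ∀ i, ∀ᶠ t in 𝓝 (0 : ℝ),
      (dᵀ * Matrix.diagonal s1 * d) *ᵥ x i t
        = lam i t • ((Matrix.diagonal s0 + t • Matrix.single w w 1) *ᵥ x i t))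
    (hnorm : ∀ i, ∀ᶠ t in 𝓝 (0 : ℝ),
      x i t ⬝ᵥ ((Matrix.diagonal s0 + t • Matrix.single w w 1) *ᵥ x i t) = 1)
    (horth : ∀ i j, x i 0 ⬝ᵥ (Matrix.diagonal s0 *ᵥ x j 0) = if i = j then 1 else 0)
    (hdist : ∀ i j, i ≠ j → lam i 0 ≠ lam j 0)
    (L : (V → ℝ) × (V → V → ℝ) → ℝ)
    (hL : DifferentiableAt ℝ L ((fun i => lam i 0), (fun i => x i 0))) :
    HasDerivAt (fun t => L ((fun i => lam i t), (fun i => x i t)))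
      (-(∑ i, (fderiv ℝ L ((fun i => lam i 0), (fun i => x i 0))
            (Pi.single i 1, 0)) * lam i 0 * (x i 0 w) ^ 2)
        + ∑ i, ∑ v, ∑ j,
          (fderiv ℝ L ((fun i => lam i 0), (fun i => x i 0))
            (0, Pi.single i (Pi.single v 1)))
          * (if j = i then (-(1 : ℝ) / 2) else lam i 0 / (lam j 0 - lam i 0))
          * x j 0 w * x i 0 w * x j 0 v) 0 :=
  stmt_14_general d s0 s1 w x lam x' lam' hx hlam heig hnorm horth hdist L hL
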